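/- (Non-relativistic limit of the Ruijsenaars–Schneider Lax matrix.) Fix ν ∈ ℂ, ν ≠ 0, and for ε ≠ 0 set η = εν and c = 1/ε in the Ruijsenaars–Schneider Lax matrix L(z) (so that b_j = e^{ε p_j}·∏_{k≠j} ϑ(q_j−q_k−εν)/ϑ(q_j−q_k) and L_{ij}(z) = φ(z, q_i−q_j+εν)·b_j). Then for all i, j, lim_{ε→0} ( ν·L_{ij}(z) − δ_{ij}/ε ) = L^CM_{ij}(z), where L^CM_{ij}(z) = δ_{ij}·(p̃_i + ν·E₁(z)) + (1−δ_{ij})·ν·φ(z, q_i−q_j) is the elliptic Calogero–Moser Lax matrix with shifted momenta p̃_i = p_i − ν·∑_{k≠i} E₁(q_i−q_k). -/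

import Mathlib

open Complex Matrix Kronecker Finset Filter Topology

noncomputable section

/-- The lattice Λ = ℤ + τℤ. -/
def Lam (τ : ℂ) : Set ℂ := {z : ℂ | ∃ m n : ℤ, z = (m : ℂ) + (n : ℂ) * τ}

/-- The first Jacobi theta function
ϑ(z) = −∑_{j∈ℤ} exp(πi(j+1/2)²τ + 2πi(j+1/2)(z+1/2)). -/
def theta (τ : ℂ) (z : ℂ) : ℂ :=
  -∑' j : ℤ, Complex.exp ((Real.pi : ℂ) * Complex.I * ((j : ℂ) + 1 / 2) ^ 2 * τ +
      2 * (Real.pi : ℂ) * Complex.I * ((j : ℂ) + 1 / 2) * (z + 1 / 2))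

/-- The first Eisenstein function E₁(u) = ϑ′(u)/ϑ(u). -/
def E1 (τ : ℂ) (u : ℂ) : ℂ := deriv (theta τ) u / theta τ u

/-- The Kronecker function φ(z,u) = ϑ′(0)·ϑ(z+u)/(ϑ(z)·ϑ(u)). -/
def phi (τ : ℂ) (z u : ℂ) : ℂ :=
  deriv (theta τ) 0 * theta τ (z + u) / (theta τ z * theta τ u)

/-- The second Eisenstein function E₂(u) = −E₁′(u). -/
def E2 (τ : ℂ) (u : ℂ) : ℂ := -deriv (E1 τ) u

/-- The Weierstrass ℘-function: ℘(u) = E₂(u) + (1/3)·ϑ‴(0)/ϑ′(0). -/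
def wp (τ : ℂ) (u : ℂ) : ℂ :=
  E2 τ u + (1 / 3) * iteratedDeriv 3 (theta τ) 0 / deriv (theta τ) 0

/-!
Everything rests on the fact that ϑ vanishes exactly on Λ, with simple zeros. The product
P(z) = sin(πz) ∏_{n≥1} (1 - qⁿ e^{2πiz}) (1 - qⁿ e^{-2πiz}), q = e^{2πiτ}, is entire, has simple
zeros exactly at Λ, and has the same multipliers as ϑ under z ↦ z + 1 and z ↦ z + τ. Hence ϑ/P
extends to a doubly periodic entire function, constant by Liouville. The constant is nonzero because
on the horizontal line Im z = -Im τ/2, ϑ is a translate of `jacobiTheta₂ x τ`, whose mean over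
x ∈ [0, 1] is 1. So ϑ(u) ≠ 0 for u ∉ Λ and ϑ'(0) ≠ 0.

The limit is then a first-order expansion at ε = 0. Off the diagonal, L_ij is continuous at ε = 0
and b_j(0) = 1. On the diagonal,
ν L_ii - 1/ε = ν (φ(z, εν) - 1/(εν)) b_i(ε) + (b_i(ε) - 1)/ε.
The second term tends to b_i'(0) = p_i - ν ∑_{k≠i} E₁(q_i - q_k). In the first,
φ(z, u) - 1/u → E₁(z), because u ↦ ϑ(u)/u is even and hence has zero derivative at 0.
-/

open Real

lemma theta_eq_jacobiTheta₂ (τ z : ℂ) : theta τ z =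
    -(cexp (π * I * τ / 4 + π * I * z + π * I / 2) * jacobiTheta₂ (z + 1 / 2 + τ / 2) τ) := by
  rw [theta, jacobiTheta₂, ← tsum_mul_left, neg_inj]
  refine tsum_congr fun n => ?_
  rw [jacobiTheta₂_term, ← Complex.exp_add]
  congr 1
  ring

lemma differentiable_theta {τ : ℂ} (hτ : 0 < τ.im) : Differentiable ℂ (theta τ) := by
  rw [funext (theta_eq_jacobiTheta₂ τ)]
  refine fun z => ((DifferentiableAt.cexp (by fun_prop)).mul ?_).neg
  exact (differentiableAt_jacobiTheta₂_fst _ hτ).comp z (by fun_prop)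

lemma theta_add_one (τ z : ℂ) : theta τ (z + 1) = -theta τ z := by
  rw [theta_eq_jacobiTheta₂, theta_eq_jacobiTheta₂,
    show z + 1 + 1 / 2 + τ / 2 = z + 1 / 2 + τ / 2 + 1 by ring, jacobiTheta₂_add_left,
    show π * I * τ / 4 + π * I * (z + 1) + π * I / 2 =
      π * I * τ / 4 + π * I * z + π * I / 2 + π * I by ring, Complex.exp_add_pi_mul_I]
  ring

lemma theta_add_tau (τ z : ℂ) :
    theta τ (z + τ) = -cexp (-(π * I * τ) - 2 * π * I * z) * theta τ z := by
  rw [theta_eq_jacobiTheta₂, theta_eq_jacobiTheta₂,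
    show z + τ + 1 / 2 + τ / 2 = z + 1 / 2 + τ / 2 + τ by ring, jacobiTheta₂_add_left',
    ← mul_assoc, ← Complex.exp_add,
    show π * I * τ / 4 + π * I * (z + τ) + π * I / 2 + -π * I * (τ + 2 * (z + 1 / 2 + τ / 2)) =
      -(π * I * τ) - 2 * π * I * z + (π * I * τ / 4 + π * I * z + π * I / 2) - π * I by ring,
    Complex.exp_sub_pi_mul_I, Complex.exp_add]
  ring

lemma theta_neg (τ z : ℂ) : theta τ (-z) = -theta τ z := by
  rw [theta_eq_jacobiTheta₂, theta_eq_jacobiTheta₂,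
    show -z + 1 / 2 + τ / 2 = -(z + 1 / 2 + τ / 2) + τ + 1 by ring, jacobiTheta₂_add_left,
    jacobiTheta₂_add_left', jacobiTheta₂_neg_left, ← mul_assoc, ← Complex.exp_add,
    show π * I * τ / 4 + π * I * -z + π * I / 2 + -π * I * (τ + 2 * -(z + 1 / 2 + τ / 2)) =
      π * I * τ / 4 + π * I * z + π * I / 2 + π * I by ring, Complex.exp_add_pi_mul_I]
  ring

lemma theta_zero (τ : ℂ) : theta τ 0 = 0 := by
  simpa [CharZero.eq_neg_self_iff] using theta_neg τ 0

lemma integral_jacobiTheta₂_term (n : ℤ) (τ : ℂ) :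
    ∫ x in (0 : ℝ)..1, jacobiTheta₂_term n x τ = if n = 0 then 1 else 0 := by
  split_ifs with hn
  · simp [hn, jacobiTheta₂_term]
  have hc : 2 * π * I * n ≠ 0 := by simp [hn, Real.pi_ne_zero]
  simp_rw [jacobiTheta₂_term, Complex.exp_add, intervalIntegral.integral_mul_const,
    integral_exp_mul_complex hc]
  rw [show 2 * π * I * n * ((1 : ℝ) : ℂ) = n * (2 * π * I) by push_cast; ring,
    Complex.exp_int_mul_two_pi_mul_I]
  simp

lemma integral_jacobiTheta₂ {τ : ℂ} (hτ : 0 < τ.im) :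
    ∫ x in (0 : ℝ)..1, jacobiTheta₂ x τ = 1 := by
  have hnorm (n : ℤ) (x : ℝ) : ‖jacobiTheta₂_term n x τ‖ = ‖jacobiTheta₂_term n 0 τ‖ := by
    simp [norm_jacobiTheta₂_term]
  have hsum : HasSum (fun n : ℤ => ∫ x in (0 : ℝ)..1, jacobiTheta₂_term n x τ)
      (∫ x in (0 : ℝ)..1, jacobiTheta₂ x τ) :=
    intervalIntegral.hasSum_integral_of_dominated_convergence
    (fun n _ => ‖jacobiTheta₂_term n 0 τ‖)
    (fun n => (by unfold jacobiTheta₂_term; fun_prop : Continuous _).aestronglyMeasurable)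
    (fun n => .of_forall fun x _ => (hnorm n x).le)
    (.of_forall fun _ _ => ((summable_jacobiTheta₂_term_iff 0 τ).mpr hτ).norm)
    intervalIntegrable_const
    (.of_forall fun x _ => hasSum_jacobiTheta₂_term x hτ)
  simp_rw [integral_jacobiTheta₂_term] at hsum
  exact hsum.unique (hasSum_ite_eq 0 1)

section Lattice

variable {τ : ℂ}

def latticeSubgroup (τ : ℂ) : AddSubgroup ℂ where
  carrier := Lam τ
  zero_mem' := ⟨0, 0, by simp⟩
  add_mem' := by
    rintro _ _ ⟨m, n, rfl⟩ ⟨m', n', rfl⟩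
    exact ⟨m + m', n + n', by push_cast; ring⟩
  neg_mem' := by
    rintro _ ⟨m, n, rfl⟩
    exact ⟨-m, -n, by push_cast; ring⟩

lemma Lam.zero_mem : (0 : ℂ) ∈ Lam τ := (latticeSubgroup τ).zero_mem

lemma Lam.one_mem : (1 : ℂ) ∈ Lam τ := ⟨1, 0, by simp⟩

lemma Lam.self_mem : τ ∈ Lam τ := ⟨0, 1, by simp⟩

lemma Lam.add_mem_iff {z c : ℂ} (hc : c ∈ Lam τ) : z + c ∈ Lam τ ↔ z ∈ Lam τ :=
  (latticeSubgroup τ).add_mem_cancel_right hc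

lemma Lam.neg_mem_iff {z : ℂ} : -z ∈ Lam τ ↔ z ∈ Lam τ :=
  (latticeSubgroup τ).neg_mem_iff

lemma Lam.sub_mem {z w : ℂ} (hz : z ∈ Lam τ) (hw : w ∈ Lam τ) : z - w ∈ Lam τ :=
  (latticeSubgroup τ).sub_mem hz hw

lemma Lam.min_le_norm (hτ : 0 < τ.im) {w : ℂ} (hw : w ∈ Lam τ) (h0 : w ≠ 0) :
    min 1 τ.im ≤ ‖w‖ := by
  obtain ⟨m, n, rfl⟩ := hw
  rcases eq_or_ne n 0 with rfl | hn
  · have hm : m ≠ 0 := by rintro rfl; simp at h0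
    calc min 1 τ.im ≤ 1 := min_le_left _ _
      _ ≤ |(m : ℝ)| := by exact_mod_cast Int.one_le_abs hm
      _ = ‖(m : ℂ) + ((0 : ℤ) : ℂ) * τ‖ := by simp
  · calc min 1 τ.im ≤ 1 * τ.im := by rw [one_mul]; exact min_le_right _ _
      _ ≤ |(n : ℝ)| * τ.im := by gcongr; exact_mod_cast Int.one_le_abs hn
      _ = |((m : ℂ) + (n : ℂ) * τ).im| := by simp [abs_mul, abs_of_pos hτ]
      _ ≤ ‖(m : ℂ) + (n : ℂ) * τ‖ := Complex.abs_im_le_norm _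

lemma Lam.isClosed (hτ : 0 < τ.im) : IsClosed (Lam τ) :=
  Metric.isClosed_of_pairwise_le_dist (lt_min one_pos hτ) fun z hz w hw hne => by
    simpa only [dist_eq_norm] using
      Lam.min_le_norm hτ (Lam.sub_mem hz hw) (sub_ne_zero.mpr hne)

lemma Lam.exists_norm_sub_le (hτ : 0 < τ.im) (z : ℂ) :
    ∃ w ∈ Lam τ, ‖z - w‖ ≤ 1 + ‖τ‖ := by
  set y := z.im / τ.im
  set x := z.re - y * τ.re
  have hz : z = x + y * τ := by
    apply Complex.ext <;> simp [x, y, hτ.ne']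
  refine ⟨_, ⟨⌊x⌋, ⌊y⌋, rfl⟩, ?_⟩
  have hx := Int.fract_nonneg x
  have hy := Int.fract_nonneg y
  calc _ = ‖((Int.fract x : ℝ) : ℂ) + ((Int.fract y : ℝ) : ℂ) * τ‖ := by
        rw [hz, Int.fract, Int.fract]; push_cast; ring_nf
    _ ≤ Int.fract x + Int.fract y * ‖τ‖ := by
        refine (norm_add_le _ _).trans_eq ?_
        rw [norm_mul, Complex.norm_real, Complex.norm_real, Real.norm_of_nonneg hx,
          Real.norm_of_nonneg hy]
    _ ≤ 1 + 1 * ‖τ‖ := by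
        gcongr <;> exact (Int.fract_lt_one _).le
    _ = 1 + ‖τ‖ := by ring

lemma Lam.periodic {F : ℂ → ℂ} (h1 : Function.Periodic F 1) (hτ : Function.Periodic F τ)
    {w : ℂ} (hw : w ∈ Lam τ) : Function.Periodic F w := by
  obtain ⟨m, n, rfl⟩ := hw
  simpa using (h1.int_mul m).add_period (hτ.int_mul n)

lemma Lam.isBounded_range_of_periodic (hτ : 0 < τ.im) {F : ℂ → ℂ} (hF : Continuous F)
    (hper : ∀ w ∈ Lam τ, Function.Periodic F w) : Bornology.IsBounded (Set.range F) := by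
  refine ((isCompact_closedBall (0 : ℂ) (1 + ‖τ‖)).image hF).isBounded.subset ?_
  rintro _ ⟨z, rfl⟩
  obtain ⟨w, hw, hzw⟩ := Lam.exists_norm_sub_le hτ z
  exact ⟨z - w, by simpa using hzw, (hper w hw).sub_eq z⟩

lemma ofReal_sub_half_notMem_Lam (hτ : 0 < τ.im) (x : ℝ) : (x : ℂ) - 1 / 2 - τ / 2 ∉ Lam τ := by
  rintro ⟨m, n, h⟩
  have him : -(τ.im / 2) = n * τ.im := by simpa using congrArg Complex.im h
  have h2 : ((2 * n + 1 : ℤ) : ℝ) * τ.im = 0 := by push_cast; linarith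
  have h3 : 2 * n + 1 = 0 := by exact_mod_cast (mul_eq_zero.mp h2).resolve_right hτ.ne'
  omega

end Lattice

section ThetaProd

variable {τ : ℂ}

def qProd (τ z : ℂ) : ℂ := ∏' n : ℕ, (1 - cexp (2 * π * I * ((n + 1) * τ + z)))

-- The Jacobi triple product for ϑ, without its constant factor.
def thetaProd (τ z : ℂ) : ℂ := Complex.sin (π * z) * (qProd τ z * qProd τ (-z))

lemma norm_cexp_qProd_le (hτ : 0 < τ.im) {R : ℝ} {z : ℂ} (hz : -R < z.im) (n : ℕ) :
    ‖cexp (2 * π * I * ((n + 1) * τ + z))‖ ≤ rexp (2 * π * R) * rexp (n * (-2 * π * τ.im)) := by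
  have hre : (2 * π * I * ((n + 1) * τ + z)).re = -(2 * π * ((n + 1) * τ.im + z.im)) := by simp
  rw [Complex.norm_exp, ← Real.exp_add, Real.exp_le_exp, hre]
  nlinarith [Real.pi_pos, mul_pos Real.pi_pos hτ]

lemma summable_qProd_bound (hτ : 0 < τ.im) (R : ℝ) :
    Summable fun n : ℕ => rexp (2 * π * R) * rexp (n * (-2 * π * τ.im)) :=
  (Real.summable_exp_nat_mul_iff.mpr (by nlinarith [mul_pos Real.pi_pos hτ])).mul_left _

lemma hasProdLocallyUniformlyOn_qProd (hτ : 0 < τ.im) (R : ℝ) :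
    HasProdLocallyUniformlyOn (fun (n : ℕ) z => 1 - cexp (2 * π * I * ((n + 1) * τ + z)))
      (qProd τ) {z | -R < z.im} := by
  simp_rw [sub_eq_add_neg]
  exact Summable.hasProdLocallyUniformlyOn_nat_one_add (isOpen_lt continuous_const
    Complex.continuous_im) (summable_qProd_bound hτ R)
    (.of_forall fun n z hz => by simpa using norm_cexp_qProd_le hτ hz n)
    (fun n => by fun_prop)

lemma differentiable_qProd (hτ : 0 < τ.im) : Differentiable ℂ (qProd τ) := by
  intro z
  have hU : IsOpen {w : ℂ | -(1 - z.im) < w.im} := isOpen_lt continuous_const Complex.continuous_im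
  refine ((hasProdLocallyUniformlyOn_qProd hτ (1 - z.im)).differentiableOn
    (.of_forall fun s => ?_) hU).differentiableAt (hU.mem_nhds (by simp))
  simpa [Finset.prod_fn] using DifferentiableOn.finsetProd fun n _ => by fun_prop

lemma qProd_ne_zero (hτ : 0 < τ.im) {z : ℂ} (hz : ∀ (n : ℕ) (k : ℤ), (n + 1) * τ + z ≠ k) :
    qProd τ z ≠ 0 := by
  simp_rw [qProd, sub_eq_add_neg]
  refine tprod_one_add_ne_zero_of_summable (fun n h => ?_) ?_
  · have h1 : cexp (2 * π * I * ((n + 1) * τ + z)) = 1 := by linear_combination -h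
    obtain ⟨k, hk⟩ := Complex.exp_eq_one_iff.mp h1
    refine hz n k (mul_left_cancel₀ (by simp [Real.pi_ne_zero] : 2 * π * I ≠ 0) ?_)
    linear_combination hk
  · simpa using (summable_qProd_bound hτ (1 - z.im)).of_nonneg_of_le (fun _ => norm_nonneg _)
      fun n => by simpa using norm_cexp_qProd_le hτ (R := 1 - z.im) (by simp) n

lemma qProd_ne_zero_of_notMem (hτ : 0 < τ.im) {z : ℂ} (hz : z ∉ Lam τ) : qProd τ z ≠ 0 :=
  qProd_ne_zero hτ fun n k h => hz ⟨k, -(n + 1), by push_cast; linear_combination h⟩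

lemma qProd_zero_ne_zero (hτ : 0 < τ.im) : qProd τ 0 ≠ 0 :=
  qProd_ne_zero hτ fun n k h => by
    have him : ((n : ℝ) + 1) * τ.im = 0 := by simpa using congrArg Complex.im h
    exact (mul_pos (by positivity) hτ).ne' him

lemma qProd_periodic (τ : ℂ) : Function.Periodic (qProd τ) 1 := fun z => by
  simp_rw [qProd, ← add_assoc, mul_add _ _ (1 : ℂ), mul_one, Complex.exp_periodic _]

lemma multipliable_qProd (hτ : 0 < τ.im) (z : ℂ) :
    Multipliable fun n : ℕ => 1 - cexp (2 * π * I * ((n + 1) * τ + z)) :=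
  ((hasProdLocallyUniformlyOn_qProd hτ (1 - z.im)).hasProd (by simp)).multipliable

lemma qProd_eq_mul_qProd_add (hτ : 0 < τ.im) (z : ℂ) :
    qProd τ z = (1 - cexp (2 * π * I * (τ + z))) * qProd τ (z + τ) := by
  have hshift : (fun n : ℕ => 1 - cexp (2 * π * I * (((n + 1 : ℕ) + 1) * τ + z))) =
      fun n : ℕ => 1 - cexp (2 * π * I * ((n + 1) * τ + (z + τ))) := by
    funext n; push_cast; ring_nf
  rw [qProd, tprod_eq_zero_mul' (hshift ▸ multipliable_qProd hτ (z + τ)), hshift, qProd]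
  simp

lemma sin_add_mul_one_sub_cexp (z τ : ℂ) :
    Complex.sin (π * (z + τ)) * (1 - cexp (-(2 * π * I * z))) =
      -cexp (-(π * I * τ) - 2 * π * I * z) * Complex.sin (π * z) *
        (1 - cexp (2 * π * I * (τ + z))) := by
  have hsq (x : ℂ) : cexp (x * 2) = cexp x ^ 2 := by rw [← Complex.exp_nat_mul]; ring_nf
  simp only [Complex.sin]
  ring_nf
  simp only [Complex.exp_add, Complex.exp_sub, Complex.exp_neg, hsq]
  field_simp
  ring

lemma differentiable_thetaProd (hτ : 0 < τ.im) : Differentiable ℂ (thetaProd τ) :=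
  (Complex.differentiable_sin.comp (differentiable_id.const_mul _)).mul
    ((differentiable_qProd hτ).mul ((differentiable_qProd hτ).comp differentiable_neg))

lemma thetaProd_ne_zero (hτ : 0 < τ.im) {z : ℂ} (hz : z ∉ Lam τ) : thetaProd τ z ≠ 0 := by
  have hsin : Complex.sin (π * z) ≠ 0 := fun h => by
    obtain ⟨k, hk⟩ := Complex.sin_eq_zero_iff.mp h
    have hπ : (π : ℂ) ≠ 0 := by exact_mod_cast Real.pi_ne_zero
    exact hz ⟨k, 0, mul_left_cancel₀ hπ (by linear_combination hk)⟩
  exact mul_ne_zero hsin (mul_ne_zero (qProd_ne_zero_of_notMem hτ hz)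
    (qProd_ne_zero_of_notMem hτ (Lam.neg_mem_iff.not.mpr hz)))

lemma thetaProd_zero (τ : ℂ) : thetaProd τ 0 = 0 := by simp [thetaProd]

lemma deriv_thetaProd_zero_ne_zero (hτ : 0 < τ.im) : deriv (thetaProd τ) 0 ≠ 0 := by
  have hsin : HasDerivAt (fun z : ℂ => Complex.sin (π * z)) π 0 := by
    simpa using ((hasDerivAt_id (0 : ℂ)).const_mul (π : ℂ)).csin
  have hq := differentiable_qProd hτ
  have hG := (by fun_prop : DifferentiableAt ℂ (fun z => qProd τ z * qProd τ (-z)) 0).hasDerivAt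
  rw [show thetaProd τ = _ from funext fun z => thetaProd.eq_1 τ z, (hsin.fun_mul hG).deriv]
  simpa [Real.pi_ne_zero] using qProd_zero_ne_zero hτ

lemma thetaProd_add_one (τ z : ℂ) : thetaProd τ (z + 1) = -thetaProd τ z := by
  rw [thetaProd, thetaProd, qProd_periodic τ z, neg_add, ← sub_eq_add_neg,
    (qProd_periodic τ).sub_eq, mul_add, mul_one, Complex.sin_add_pi]
  ring

lemma thetaProd_add_tau (hτ : 0 < τ.im) (z : ℂ) :
    thetaProd τ (z + τ) = -cexp (-(π * I * τ) - 2 * π * I * z) * thetaProd τ z := by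
  have h := qProd_eq_mul_qProd_add hτ (-(z + τ))
  rw [show -(z + τ) + τ = -z by ring, show 2 * π * I * (τ + -(z + τ)) = -(2 * π * I * z) by ring]
    at h
  rw [thetaProd, thetaProd, h, qProd_eq_mul_qProd_add hτ z]
  linear_combination (qProd τ (z + τ) * qProd τ (-z)) * sin_add_mul_one_sub_cexp z τ

end ThetaProd

lemma Differentiable.dslope {f : ℂ → ℂ} (hf : Differentiable ℂ f) (a : ℂ) :
    Differentiable ℂ (dslope f a) := fun z =>
  ((Complex.differentiableOn_dslope Filter.univ_mem).mpr hf.differentiableOn z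
    (Set.mem_univ z)).differentiableAt Filter.univ_mem

section LatticeQuotient

variable {τ : ℂ} {f g : ℂ → ℂ}

-- On Λ we use the limit of f/g at 0, the value that makes the quotient continuous at 0.
open scoped Classical in
def latticeQuotient (τ : ℂ) (f g : ℂ → ℂ) (z : ℂ) : ℂ :=
  if z ∈ Lam τ then deriv f 0 / deriv g 0 else f z / g z

lemma latticeQuotient_of_notMem {z : ℂ} (hz : z ∉ Lam τ) :
    latticeQuotient τ f g z = f z / g z := if_neg hz

lemma latticeQuotient_of_mem {z : ℂ} (hz : z ∈ Lam τ) :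
    latticeQuotient τ f g z = deriv f 0 / deriv g 0 := if_pos hz

lemma latticeQuotient_periodic {c : ℂ} (hc : c ∈ Lam τ) (hg : ∀ z ∉ Lam τ, g z ≠ 0)
    (hfg : ∀ z, f (z + c) * g z = g (z + c) * f z) :
    Function.Periodic (latticeQuotient τ f g) c := by
  intro z
  by_cases hz : z ∈ Lam τ
  · rw [latticeQuotient_of_mem hz, latticeQuotient_of_mem ((Lam.add_mem_iff hc).mpr hz)]
  · have hz' : z + c ∉ Lam τ := (Lam.add_mem_iff hc).not.mpr hz
    rw [latticeQuotient_of_notMem hz, latticeQuotient_of_notMem hz',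
      div_eq_div_iff (hg _ hz') (hg _ hz), hfg, mul_comm]

lemma latticeQuotient_eventuallyEq_div (hτ : 0 < τ.im) {z : ℂ} (hz : z ∉ Lam τ) :
    latticeQuotient τ f g =ᶠ[𝓝 z] fun w => f w / g w := by
  filter_upwards [(Lam.isClosed hτ).isOpen_compl.mem_nhds hz] with w hw
  exact latticeQuotient_of_notMem hw

lemma latticeQuotient_eventuallyEq_dslope (hτ : 0 < τ.im) (hf0 : f 0 = 0) (hg0 : g 0 = 0) :
    latticeQuotient τ f g =ᶠ[𝓝 0] fun w => dslope f 0 w / dslope g 0 w := by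
  filter_upwards [Metric.ball_mem_nhds 0 (lt_min one_pos hτ)] with w hw
  rcases eq_or_ne w 0 with rfl | hw0
  · rw [latticeQuotient_of_mem Lam.zero_mem, dslope_same, dslope_same]
  · have hwL : w ∉ Lam τ := fun h => (Lam.min_le_norm hτ h hw0).not_gt (by simpa using hw)
    rw [latticeQuotient_of_notMem hwL, dslope_of_ne _ hw0, dslope_of_ne _ hw0, slope_def_field,
      slope_def_field, hf0, hg0, sub_zero, sub_zero, sub_zero, div_div_div_cancel_right₀ hw0]

lemma differentiable_latticeQuotient (hτ : 0 < τ.im) (hf : Differentiable ℂ f)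
    (hg : Differentiable ℂ g) (hf0 : f 0 = 0) (hg0 : g 0 = 0) (hg' : deriv g 0 ≠ 0)
    (hgΛ : ∀ z ∉ Lam τ, g z ≠ 0) (hper : ∀ w ∈ Lam τ, Function.Periodic (latticeQuotient τ f g) w) :
    Differentiable ℂ (latticeQuotient τ f g) := by
  have h0 : DifferentiableAt ℂ (latticeQuotient τ f g) 0 :=
    (((hf.dslope 0) 0).div ((hg.dslope 0) 0) (by rwa [dslope_same])).congr_of_eventuallyEq
      (latticeQuotient_eventuallyEq_dslope hτ hf0 hg0)
  intro z
  by_cases hz : z ∈ Lam τ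
  · have hshift : latticeQuotient τ f g = fun w => latticeQuotient τ f g (w - z) :=
      funext fun w => ((hper z hz).sub_eq w).symm
    rw [hshift]
    exact DifferentiableAt.comp (f := fun w => w - z) z (by rwa [sub_self])
      (differentiableAt_id.sub_const z)
  · exact ((hf z).div (hg z) (hgΛ z hz)).congr_of_eventuallyEq
      (latticeQuotient_eventuallyEq_div hτ hz)

theorem exists_eq_mul_of_quasiPeriodic (hτ : 0 < τ.im) (hf : Differentiable ℂ f)
    (hg : Differentiable ℂ g) (hf0 : f 0 = 0) (hg0 : g 0 = 0) (hg' : deriv g 0 ≠ 0)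
    (hgΛ : ∀ z ∉ Lam τ, g z ≠ 0) (h1 : ∀ z, f (z + 1) * g z = g (z + 1) * f z)
    (hτ' : ∀ z, f (z + τ) * g z = g (z + τ) * f z) :
    ∃ C, (∀ z ∉ Lam τ, f z = C * g z) ∧ deriv f 0 = C * deriv g 0 := by
  have hper : ∀ w ∈ Lam τ, Function.Periodic (latticeQuotient τ f g) w := fun w =>
    Lam.periodic (latticeQuotient_periodic Lam.one_mem hgΛ h1)
      (latticeQuotient_periodic Lam.self_mem hgΛ hτ')
  have hdiff := differentiable_latticeQuotient hτ hf hg hf0 hg0 hg' hgΛ hper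
  have hconst (z : ℂ) : latticeQuotient τ f g z = latticeQuotient τ f g 0 :=
    hdiff.apply_eq_apply_of_bounded (Lam.isBounded_range_of_periodic hτ hdiff.continuous hper) z 0
  refine ⟨latticeQuotient τ f g 0, fun z hz => ?_, ?_⟩
  · rw [← hconst z, latticeQuotient_of_notMem hz, div_mul_cancel₀ _ (hgΛ z hz)]
  · rw [latticeQuotient_of_mem Lam.zero_mem, div_mul_cancel₀ _ hg']

end LatticeQuotient

section ThetaZeros

variable {τ : ℂ}

lemma exists_theta_ne_zero (hτ : 0 < τ.im) : ∃ z ∉ Lam τ, theta τ z ≠ 0 := by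
  by_contra! h
  have hJ (x : ℝ) : jacobiTheta₂ x τ = 0 := by
    have hx := h _ (ofReal_sub_half_notMem_Lam hτ x)
    rw [theta_eq_jacobiTheta₂, show (x : ℂ) - 1 / 2 - τ / 2 + 1 / 2 + τ / 2 = x by ring,
      neg_eq_zero] at hx
    exact (mul_eq_zero.mp hx).resolve_left (Complex.exp_ne_zero _)
  simpa [hJ] using integral_jacobiTheta₂ hτ

lemma exists_theta_eq_mul_thetaProd (hτ : 0 < τ.im) :
    ∃ C ≠ 0, (∀ z ∉ Lam τ, theta τ z = C * thetaProd τ z) ∧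
      deriv (theta τ) 0 = C * deriv (thetaProd τ) 0 := by
  obtain ⟨C, hC, hC'⟩ := exists_eq_mul_of_quasiPeriodic hτ (differentiable_theta hτ)
    (differentiable_thetaProd hτ) (theta_zero τ) (thetaProd_zero τ)
    (deriv_thetaProd_zero_ne_zero hτ) (fun _ => thetaProd_ne_zero hτ)
    (fun z => by rw [theta_add_one, thetaProd_add_one]; ring)
    (fun z => by rw [theta_add_tau, thetaProd_add_tau hτ]; ring)
  refine ⟨C, ?_, hC, hC'⟩
  rintro rfl
  obtain ⟨z, hz, hθ⟩ := exists_theta_ne_zero hτ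
  exact hθ (by simpa using hC z hz)

theorem theta_ne_zero (hτ : 0 < τ.im) {z : ℂ} (hz : z ∉ Lam τ) : theta τ z ≠ 0 := by
  obtain ⟨C, hC0, hC, -⟩ := exists_theta_eq_mul_thetaProd hτ
  rw [hC z hz]
  exact mul_ne_zero hC0 (thetaProd_ne_zero hτ hz)

theorem deriv_theta_zero_ne_zero (hτ : 0 < τ.im) : deriv (theta τ) 0 ≠ 0 := by
  obtain ⟨C, hC0, -, hC'⟩ := exists_theta_eq_mul_thetaProd hτ
  rw [hC']
  exact mul_ne_zero hC0 (deriv_thetaProd_zero_ne_zero hτ)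

end ThetaZeros

section Limits

lemma deriv_zero_of_even {𝕜 : Type*} [NontriviallyNormedField 𝕜] [CharZero 𝕜] {h : 𝕜 → 𝕜}
    (he : ∀ w, h (-w) = h w) : deriv h 0 = 0 := by
  have h' := deriv_comp_neg (f := h) (x := 0)
  simp only [he, neg_zero] at h'
  exact CharZero.eq_neg_self_iff.mp h'

lemma tendsto_kronecker_sub_inv {f : ℂ → ℂ} {z : ℂ} (hf : Differentiable ℂ f)
    (hodd : ∀ w, f (-w) = -f w) (hf' : deriv f 0 ≠ 0) (hz : f z ≠ 0) :
    Tendsto (fun u => deriv f 0 * f (z + u) / (f z * f u) - u⁻¹) (𝓝[≠] 0)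
      (𝓝 (deriv f z / f z)) := by
  have hf0 : f 0 = 0 := by simpa [CharZero.eq_neg_self_iff] using hodd 0
  have hr (w : ℂ) (hw : w ≠ 0) : dslope f 0 w = f w / w := by
    rw [dslope_of_ne _ hw, slope_def_field, hf0, sub_zero, sub_zero]
  have hr_even (w : ℂ) : dslope f 0 (-w) = dslope f 0 w := by
    rcases eq_or_ne w 0 with rfl | hw
    · rw [neg_zero]
    · rw [hr w hw, hr _ (neg_ne_zero.mpr hw), hodd, neg_div_neg_eq]
  set A : ℂ → ℂ := fun u => deriv f 0 * f (z + u) / (f z * dslope f 0 u)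
  have hA : HasDerivAt A (deriv f z / f z) 0 := by
    have hnum : HasDerivAt (fun u => deriv f 0 * f (z + u)) (deriv f 0 * deriv f z) 0 := by
      simpa using ((hf (z + 0)).hasDerivAt.comp_const_add z 0).const_mul (deriv f 0)
    have hden : HasDerivAt (fun u => f z * dslope f 0 u) (f z * 0) 0 := by
      have h := ((hf.dslope 0) 0).hasDerivAt.const_mul (f z)
      rwa [deriv_zero_of_even hr_even] at h
    refine (hnum.div hden (by simp [dslope_same, hz, hf'])).congr_deriv ?_
    rw [dslope_same]
    field_simp
    ring
  have hA0 : A 0 = 1 := by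
    simp only [A, add_zero, dslope_same]
    rw [mul_comm]
    exact div_self (mul_ne_zero hz hf')
  refine ((hasDerivAt_iff_tendsto_slope.mp hA).congr' ?_)
  filter_upwards [self_mem_nhdsWithin] with u (hu : u ≠ 0)
  rw [slope_def_field, hA0, sub_zero]
  simp only [A, hr u hu]
  field_simp

lemma tendsto_phi_sub_inv {τ z : ℂ} (hτ : 0 < τ.im) (hz : z ∉ Lam τ) :
    Tendsto (fun u => phi τ z u - u⁻¹) (𝓝[≠] 0) (𝓝 (E1 τ z)) :=
  tendsto_kronecker_sub_inv (differentiable_theta hτ) (theta_neg τ) (deriv_theta_zero_ne_zero hτ)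
    (theta_ne_zero hτ hz)

lemma continuousAt_phi {τ z u : ℂ} (hτ : 0 < τ.im) (hz : z ∉ Lam τ) (hu : u ∉ Lam τ) :
    ContinuousAt (phi τ z) u := by
  have hθ := (differentiable_theta hτ).continuous
  exact (continuousAt_const.mul (hθ.comp (continuous_const_add z)).continuousAt).div
    (continuousAt_const.mul hθ.continuousAt)
    (mul_ne_zero (theta_ne_zero hτ hz) (theta_ne_zero hτ hu))

lemma hasDerivAt_exp_mul_prod_div {ι : Type*} (s : Finset ι) {f : ℂ → ℂ} {a : ι → ℂ} (p ν : ℂ)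
    (hf : ∀ k ∈ s, DifferentiableAt ℂ f (a k)) (hfa : ∀ k ∈ s, f (a k) ≠ 0) :
    HasDerivAt (fun ε => cexp (ε * p) * ∏ k ∈ s, f (a k - ε * ν) / f (a k))
      (p - ν * ∑ k ∈ s, deriv f (a k) / f (a k)) 0 := by
  classical
  have hone (k : ι) (hk : k ∈ s) : f (a k - 0 * ν) / f (a k) = 1 := by
    rw [zero_mul, sub_zero, div_self (hfa k hk)]
  have hfactor (k : ι) (hk : k ∈ s) : HasDerivAt (fun ε => f (a k - ε * ν) / f (a k))
      (-(ν * (deriv f (a k) / f (a k)))) 0 := by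
    have hin : HasDerivAt (fun ε : ℂ => a k - ε * ν) (-ν) 0 := by
      simpa using ((hasDerivAt_id (0 : ℂ)).mul_const ν).const_sub (a k)
    exact (((hf k hk).hasDerivAt.comp_of_eq 0 hin (by simp)).div_const _).congr_deriv (by ring)
  have hexp : HasDerivAt (fun ε : ℂ => cexp (ε * p)) p 0 := by
    simpa using ((hasDerivAt_id (0 : ℂ)).mul_const p).cexp
  refine (hexp.fun_mul (HasDerivAt.fun_finsetProd hfactor)).congr_deriv ?_
  rw [Finset.prod_congr rfl hone, Finset.sum_congr rfl fun k hk => by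
    rw [Finset.prod_congr rfl fun l hl => hone l (Finset.mem_of_mem_erase hl)]]
  simp [Finset.mul_sum]
  ring

lemma tendsto_mul_sub_inv {φ b : ℂ → ℂ} {L b' ν : ℂ} (hν : ν ≠ 0)
    (hφ : Tendsto (fun u => φ u - u⁻¹) (𝓝[≠] 0) (𝓝 L)) (hb : HasDerivAt b b' 0) (hb0 : b 0 = 1) :
    Tendsto (fun ε => ν * (φ (ε * ν) * b ε) - 1 / ε) (𝓝[≠] 0) (𝓝 (b' + ν * L)) := by
  have hscale : Tendsto (fun ε : ℂ => ε * ν) (𝓝[≠] 0) (𝓝[≠] 0) :=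
    tendsto_nhdsWithin_of_tendsto_nhds_of_eventually_within _
      ((continuous_mul_const ν).tendsto' 0 0 (zero_mul ν) |>.mono_left nhdsWithin_le_nhds)
      (by filter_upwards [self_mem_nhdsWithin] with ε (hε : ε ≠ 0) using mul_ne_zero hε hν)
  have hlim := ((tendsto_const_nhds (x := ν)).mul ((hφ.comp hscale).mul
    (hb0 ▸ hb.continuousAt.tendsto.mono_left nhdsWithin_le_nhds))).add
    (hasDerivAt_iff_tendsto_slope.mp hb)
  rw [mul_one, add_comm] at hlim
  refine hlim.congr' ?_
  filter_upwards [self_mem_nhdsWithin] with ε (hε : ε ≠ 0)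
  simp only [Function.comp, slope_def_field, hb0, sub_zero]
  field_simp
  ring

lemma tendsto_mul_of_continuousAt {φ b : ℂ → ℂ} {u ν : ℂ} (hφ : ContinuousAt φ u)
    (hb : ContinuousAt b 0) (hb0 : b 0 = 1) :
    Tendsto (fun ε => ν * (φ (u + ε * ν) * b ε)) (𝓝[≠] 0) (𝓝 (ν * φ u)) := by
  have hφ' : ContinuousAt (fun ε : ℂ => φ (u + ε * ν)) 0 := hφ.comp_of_eq (by fun_prop) (by simp)
  have h := ((continuousAt_const (y := ν)).fun_mul (hφ'.fun_mul hb)).tendsto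
  rw [hb0, zero_mul, add_zero, mul_one] at h
  exact h.mono_left nhdsWithin_le_nhds

end Limits

/-- non-relativistic limit of the Ruijsenaars–Schneider Lax matrix.
With η = εν and c = 1/ε, for all i, j,
lim_{ε→0} (ν·L_{ij}(z) − δ_{ij}/ε) = L^CM_{ij}(z), the elliptic Calogero–Moser Lax
matrix with shifted momenta p̃_i = p_i − ν·∑_{k≠i} E₁(q_i−q_k). -/
theorem rs_nonrelativistic_limit_lax {N : ℕ} (τ ν : ℂ) (hτ : 0 < τ.im) (hν : ν ≠ 0)
    (p q : Fin N → ℂ) (z : ℂ) (hz : z ∉ Lam τ)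
    (hq : ∀ i j : Fin N, i ≠ j → q i - q j ∉ Lam τ) (i j : Fin N) :
    Filter.Tendsto
      (fun ε : ℂ =>
        ν * (phi τ z (q i - q j + ε * ν) *
          (Complex.exp (ε * p j) *
            ∏ k ∈ Finset.univ.filter (fun k => k ≠ j),
              theta τ (q j - q k - ε * ν) / theta τ (q j - q k))) -
        (if i = j then (1 : ℂ) else 0) / ε)
      (𝓝[≠] (0 : ℂ))
      (𝓝 ((if i = j then (1 : ℂ) else 0) *
            ((p i - ν * ∑ k ∈ Finset.univ.filter (fun k => k ≠ i), E1 τ (q i - q k)) +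
              ν * E1 τ z) +
          (1 - (if i = j then (1 : ℂ) else 0)) * (ν * phi τ z (q i - q j)))) := by
  have hθq (j k : Fin N) (hk : k ∈ univ.filter (fun k => k ≠ j)) : theta τ (q j - q k) ≠ 0 :=
    theta_ne_zero hτ (hq j k (Finset.mem_filter.mp hk).2.symm)
  have hb := hasDerivAt_exp_mul_prod_div (univ.filter fun k => k ≠ j) (a := fun k => q j - q k)
    (p j) ν (fun k _ => differentiable_theta hτ _) (hθq j)
  have hb0 : cexp (0 * p j) * ∏ k ∈ univ.filter (fun k => k ≠ j),
      theta τ (q j - q k - 0 * ν) / theta τ (q j - q k) = 1 := by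
    simpa using Finset.prod_eq_one fun k hk => div_self (hθq j k hk)
  by_cases hij : i = j
  · subst hij
    simpa [E1] using tendsto_mul_sub_inv hν (tendsto_phi_sub_inv hτ hz) hb hb0
  · simpa [hij] using tendsto_mul_of_continuousAt (continuousAt_phi hτ hz (hq i j hij))
      hb.continuousAt hb0

end
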